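/- Let G be a graph without a 2-factor and let (S,T) be a minimum barrier. Then for every component C of G−(S∪T) with e_G(C,T) odd and every vertex v ∈ T, v has at most one neighbor in C, i.e., e_G(v, V(C)) ≤ 1. -/

import Mathlib

open SimpleGraph

namespace VizingTwoFactor

variable {V : Type*}

/-- The degree of a vertex, as the `ncard` of its neighbor set. -/
noncomputable def ndeg (G : SimpleGraph V) (v : V) : ℕ :=
  (G.neighborSet v).ncard

/-- `G` is bipartite with parts `X` and `T`. -/
def IsBipartiteWith (G : SimpleGraph V) (X T : Set V) : Prop :=
  Disjoint X T ∧ ∀ u v : V, G.Adj u v → (u ∈ X ∧ v ∈ T) ∨ (u ∈ T ∧ v ∈ X)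

/-- The set of neighbors of a set of vertices. -/
def NSet (G : SimpleGraph V) (A : Set V) : Set V :=
  {v | ∃ a ∈ A, G.Adj a v}

/-- `G` has a matching saturating the vertex set `T`. -/
def HasMatchingSaturating (G : SimpleGraph V) (T : Set V) : Prop :=
  ∃ M : G.Subgraph, M.IsMatching ∧ T ⊆ M.verts

/-- Number of (ordered) adjacent pairs with first coordinate in `A` and second in `B`;
for disjoint `A`, `B` this is the number of edges between `A` and `B`. -/
noncomputable def eBetween (G : SimpleGraph V) (A B : Set V) : ℕ :=
  {p : V × V | p.1 ∈ A ∧ p.2 ∈ B ∧ G.Adj p.1 p.2}.ncard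

/-- Number of neighbors of `v` inside `A`. -/
noncomputable def degIn (G : SimpleGraph V) (A : Set V) (v : V) : ℕ :=
  (G.neighborSet v ∩ A).ncard

/-- The vertex set (in `V`) of a connected component of an induced subgraph. -/
def csupp (G : SimpleGraph V) (U : Set V) (C : (G.induce U).ConnectedComponent) : Set V :=
  Subtype.val '' C.supp

/-- The odd components of `G − (S ∪ T)` w.r.t. `(S,T)`: components sending an odd
number of edges to `T`. -/
noncomputable def oddComps (G : SimpleGraph V) (S T : Set V) :
    Set ((G.induce (S ∪ T)ᶜ).ConnectedComponent) :=
  {C | Odd (eBetween G (csupp G (S ∪ T)ᶜ C) T)}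

/-- `h_G(S,T)`: the number of odd components. -/
noncomputable def hNum (G : SimpleGraph V) (S T : Set V) : ℕ :=
  (oddComps G S T).ncard

/-- `δ_G(S,T) = 2|S| + Σ_{v∈T} deg_{G−S}(v) − 2|T| − h_G(S,T)`. -/
noncomputable def deltaST (G : SimpleGraph V) (S T : Set V) : ℤ :=
  2 * S.ncard + (∑ᶠ v ∈ T, (degIn G Sᶜ v : ℤ)) - 2 * T.ncard - hNum G S T

/-- A barrier. -/
def IsBarrier (G : SimpleGraph V) (S T : Set V) : Prop :=
  Disjoint S T ∧ deltaST G S T ≤ -2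

/-- A minimum barrier: minimizes `|S ∪ T|` among barriers. -/
def IsMinBarrier (G : SimpleGraph V) (S T : Set V) : Prop :=
  IsBarrier G S T ∧ ∀ S' T' : Set V, IsBarrier G S' T' → (S ∪ T).ncard ≤ (S' ∪ T').ncard

/-- `G` has a 2-factor: a spanning subgraph in which every vertex has degree 2. -/
def HasTwoFactor (G : SimpleGraph V) : Prop :=
  ∃ H : SimpleGraph V, H ≤ G ∧ ∀ v : V, ndeg H v = 2

/-- `G` has a proper edge coloring with `k` colors. -/
def HasEdgeColoring (G : SimpleGraph V) (k : ℕ) : Prop :=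
  ∃ f : G.edgeSet → Fin k, ∀ e₁ e₂ : G.edgeSet, e₁ ≠ e₂ →
    (∃ v : V, v ∈ (e₁ : Sym2 V) ∧ v ∈ (e₂ : Sym2 V)) → f e₁ ≠ f e₂

/-- The chromatic index `χ'(G)`. -/
noncomputable def chromIdx (G : SimpleGraph V) : ℕ :=
  sInf {k | HasEdgeColoring G k}

/-- `Δ` is the maximum degree of `G`. -/
def IsMaxDegree (G : SimpleGraph V) (Δ : ℕ) : Prop :=
  (∀ v : V, ndeg G v ≤ Δ) ∧ ∃ v : V, ndeg G v = Δ

/-- `G` is `Δ`-critical: no isolated vertices, maximum degree `Δ`, `χ'(G) = Δ + 1`, and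
`χ'(G − e) = Δ` for every edge `e`. -/
def IsDeltaCritical (G : SimpleGraph V) (Δ : ℕ) : Prop :=
  (∀ v : V, ∃ u : V, G.Adj v u) ∧ IsMaxDegree G Δ ∧ chromIdx G = Δ + 1 ∧
    ∀ e ∈ G.edgeSet, chromIdx (G.deleteEdges {e}) = Δ

/-- `T` is an independent set in `G`. -/
def IsIndep (G : SimpleGraph V) (T : Set V) : Prop :=
  ∀ u ∈ T, ∀ v ∈ T, ¬ G.Adj u v

/-- The bipartite graph `H*` consisting of the edges of `G` between `V(G) \ T` and `T`. -/
def betweenGraph (G : SimpleGraph V) (T : Set V) : SimpleGraph V where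
  Adj u v := G.Adj u v ∧ ((u ∉ T ∧ v ∈ T) ∨ (u ∈ T ∧ v ∉ T))
  symm := ⟨fun u v h => ⟨h.1.symm, h.2.elim (fun h' => Or.inr ⟨h'.2, h'.1⟩)
    (fun h' => Or.inl ⟨h'.2, h'.1⟩)⟩⟩
  loopless := ⟨fun u h => G.loopless.irrefl u h.1⟩

/-!
If some `v ∈ T` had two neighbours in a component `C₀` of `G − (S ∪ T)`, then `(S, T − v)` would
still be a barrier, contradicting minimality. Let `d = deg_{G−S}(v)`. Removing `v` from `T`
changes `δ` by `2 − d` plus the change of `h`. In `G − (S ∪ (T − v))` the vertex `v` and the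
components adjacent to it merge into one component `M`, while the other components keep their
parity; so if `a` of the merged components were odd, `h` drops by `a − [M odd]`. Since `v` sends
an edge into every adjacent component and two into `C₀`, `d − a ≥ 1`; and counting the edges from
`M` to `T − v` modulo 2 shows that `M` is odd exactly when `d − a` is. Hence
`d − a + [M odd] ≥ 2`, so `δ` does not increase.
-/

lemma card_add_one_le_sum {ι : Type*} {s : Finset ι} {f : ι → ℕ}
    (h : ∀ i ∈ s, 1 ≤ f i) {i₀ : ι} (hi₀ : i₀ ∈ s) (h₀ : 2 ≤ f i₀) :
    s.card + 1 ≤ ∑ i ∈ s, f i := by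
  classical
  have : (s.erase i₀).card ≤ ∑ i ∈ s.erase i₀, f i := by
    simpa using Finset.card_nsmul_le_sum _ f 1 fun i hi => h i (Finset.mem_of_mem_erase hi)
  rw [← Finset.add_sum_erase s f hi₀, ← Finset.card_erase_add_one hi₀]
  omega

lemma ncard_setOf_eq_card_filter_add {α : Type*} [Finite α] (s : Finset α) (P : α → Prop)
    [DecidablePred P] : {a | P a}.ncard = (s.filter P).card + {a | a ∉ s ∧ P a}.ncard := by
  rw [← Set.ncard_coe_finset, Finset.coe_filter, ← Set.ncard_union_eq]
  · congr 1
    ext a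
    by_cases a ∈ s <;> simp [*]
  · exact Set.disjoint_left.2 fun a ha ha' => ha'.1 ha.1

section EdgeCounts
variable (G : SimpleGraph V)

lemma eBetween_comm (A B : Set V) : eBetween G A B = eBetween G B A := by
  have : {p : V × V | p.1 ∈ A ∧ p.2 ∈ B ∧ G.Adj p.1 p.2} =
      Prod.swap '' {p : V × V | p.1 ∈ B ∧ p.2 ∈ A ∧ G.Adj p.1 p.2} := by
    ext ⟨x, y⟩
    simp only [Set.mem_ofPred_eq, Set.mem_image, Prod.exists, Prod.swap_prod_mk, Prod.mk.injEq]
    constructor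
    · rintro ⟨hx, hy, hxy⟩
      exact ⟨y, x, ⟨hy, hx, hxy.symm⟩, rfl, rfl⟩
    · rintro ⟨_, _, ⟨hy, hx, hyx⟩, rfl, rfl⟩
      exact ⟨hx, hy, hyx.symm⟩
  rw [eBetween, eBetween, this, Set.ncard_image_of_injective _ Prod.swap_injective]

lemma eBetween_singleton_left (v : V) (B : Set V) : eBetween G {v} B = degIn G B v := by
  have : {p : V × V | p.1 ∈ ({v} : Set V) ∧ p.2 ∈ B ∧ G.Adj p.1 p.2} =
      (fun x => (v, x)) '' (G.neighborSet v ∩ B) := by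
    ext ⟨x, y⟩
    simp only [Set.mem_ofPred_eq, Set.mem_singleton_iff, Set.mem_image, Set.mem_inter_iff,
      mem_neighborSet, Prod.mk.injEq]
    constructor
    · rintro ⟨rfl, hy, hxy⟩
      exact ⟨y, ⟨hxy, hy⟩, rfl, rfl⟩
    · rintro ⟨_, ⟨hxy, hy⟩, rfl, rfl⟩
      exact ⟨rfl, hy, hxy⟩
  rw [eBetween, degIn, this, Set.ncard_image_of_injective _ (Prod.mk_right_injective v)]

lemma eBetween_singleton_right (A : Set V) (v : V) : eBetween G A {v} = degIn G A v := by
  rw [eBetween_comm, eBetween_singleton_left]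

lemma degIn_insert_self (v : V) (A : Set V) : degIn G (insert v A) v = degIn G A v := by
  rw [degIn, degIn, Set.inter_insert_of_notMem G.notMem_neighborSet_self]

variable [Finite V]

lemma eBetween_union_left {A A' : Set V} (h : Disjoint A A') (B : Set V) :
    eBetween G (A ∪ A') B = eBetween G A B + eBetween G A' B := by
  have : {p : V × V | p.1 ∈ A ∪ A' ∧ p.2 ∈ B ∧ G.Adj p.1 p.2} =
      {p : V × V | p.1 ∈ A ∧ p.2 ∈ B ∧ G.Adj p.1 p.2} ∪
        {p : V × V | p.1 ∈ A' ∧ p.2 ∈ B ∧ G.Adj p.1 p.2} := by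
    ext p
    simp only [Set.mem_ofPred_eq, Set.mem_union]
    tauto
  rw [eBetween, this, Set.ncard_union_eq _ (Set.toFinite _) (Set.toFinite _)]
  · rfl
  · exact Set.disjoint_left.2 fun p hp hp' => Set.disjoint_left.1 h hp.1 hp'.1

lemma eBetween_biUnion_left {ι : Type*} {s : Finset ι} {A : ι → Set V}
    (h : (s : Set ι).PairwiseDisjoint A) (B : Set V) :
    eBetween G (⋃ i ∈ s, A i) B = ∑ i ∈ s, eBetween G (A i) B := by
  classical
  induction s using Finset.induction_on with
  | empty => simp [eBetween]
  | insert i s hi ih =>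
    rw [Finset.coe_insert, Set.pairwiseDisjoint_insert] at h
    rw [Finset.set_biUnion_insert, Finset.sum_insert hi, ← ih h.1, eBetween_union_left G]
    exact Set.disjoint_iUnion₂_right.2 fun j hj => h.2 j hj (ne_of_mem_of_not_mem hj hi).symm

lemma degIn_union {A A' : Set V} (h : Disjoint A A') (v : V) :
    degIn G (A ∪ A') v = degIn G A v + degIn G A' v := by
  rw [← eBetween_singleton_right, eBetween_union_left G h, eBetween_singleton_right,
    eBetween_singleton_right]

lemma degIn_pos_iff (A : Set V) (v : V) : 0 < degIn G A v ↔ ∃ x ∈ A, G.Adj v x := by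
  simp only [degIn, Set.ncard_pos (Set.toFinite _), Set.Nonempty, Set.mem_inter_iff,
    mem_neighborSet]
  exact exists_congr fun x => And.comm

lemma eBetween_eq_eBetween_sdiff_singleton_add {v : V} {T : Set V} (hvT : v ∈ T) (A : Set V) :
    eBetween G A T = eBetween G A (T \ {v}) + degIn G A v := by
  conv_lhs => rw [← Set.sdiff_union_of_subset (Set.singleton_subset_iff.2 hvT)]
  rw [eBetween_comm, eBetween_union_left G Set.disjoint_sdiff_left, eBetween_comm,
    eBetween_singleton_left]

end EdgeCounts

lemma mem_of_reachable_of_adj_closed {G : SimpleGraph V} {s : Set V}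
    (hs : ∀ x y, G.Adj x y → x ∈ s → y ∈ s) {x y : V} (h : G.Reachable x y) (hx : x ∈ s) :
    y ∈ s := by
  obtain ⟨p⟩ := h
  induction p with
  | nil => exact hx
  | cons hadj _ ih => exact ih (hs _ _ hadj hx)

section Components
variable (G : SimpleGraph V) {U : Set V}

lemma mem_csupp {C : (G.induce U).ConnectedComponent} {x : V} :
    x ∈ csupp G U C ↔ ∃ hx : x ∈ U, (G.induce U).connectedComponentMk ⟨x, hx⟩ = C := by
  simp [csupp]

lemma mem_csupp_mk (x : U) : (x : V) ∈ csupp G U ((G.induce U).connectedComponentMk x) :=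
  ⟨x, rfl, rfl⟩

lemma csupp_subset (C : (G.induce U).ConnectedComponent) : csupp G U C ⊆ U :=
  Set.image_subset_iff.2 fun x _ => x.2

lemma csupp_injective : Function.Injective (csupp G U) :=
  (Set.image_injective.2 Subtype.val_injective).comp ConnectedComponent.supp_injective

lemma pairwiseDisjoint_csupp (s : Set (G.induce U).ConnectedComponent) :
    s.PairwiseDisjoint (csupp G U) := fun _ _ _ _ h =>
  (Set.disjoint_image_iff Subtype.val_injective).2 (pairwise_disjoint_supp_connectedComponent _ h)

end Components

section InsertVertex
variable (G : SimpleGraph V) {U : Set V} {v : V}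

abbrev insertMap (v : V) (C : (G.induce U).ConnectedComponent) :
    (G.induce (insert v U)).ConnectedComponent :=
  C.map (G.induceHomOfLE (Set.subset_insert v U)).toHom

lemma insertMap_mk (x : U) :
    insertMap G v ((G.induce U).connectedComponentMk x) =
      (G.induce (insert v U)).connectedComponentMk ⟨x, Set.mem_insert_of_mem v x.2⟩ :=
  rfl

lemma csupp_subset_csupp_insertMap (C : (G.induce U).ConnectedComponent) :
    csupp G U C ⊆ csupp G (insert v U) (insertMap G v C) := by
  intro x hx
  obtain ⟨hxU, rfl⟩ := (mem_csupp G).1 hx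
  exact mem_csupp_mk G _

variable [Finite V]

noncomputable def adjComps (G : SimpleGraph V) (U : Set V) (v : V) :
    Finset (G.induce U).ConnectedComponent :=
  (Set.toFinite {C | ∃ x ∈ csupp G U C, G.Adj v x}).toFinset

lemma mem_adjComps {C : (G.induce U).ConnectedComponent} :
    C ∈ adjComps G U v ↔ ∃ x ∈ csupp G U C, G.Adj v x :=
  Set.Finite.mem_toFinset _

lemma insertMap_eq_of_mem_adjComps {C : (G.induce U).ConnectedComponent}
    (hC : C ∈ adjComps G U v) :
    insertMap G v C = (G.induce (insert v U)).connectedComponentMk ⟨v, Set.mem_insert v U⟩ := by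
  obtain ⟨x, hx, hvx⟩ := (mem_adjComps G).1 hC
  obtain ⟨hxU, rfl⟩ := (mem_csupp G).1 hx
  exact ConnectedComponent.connectedComponentMk_eq_of_adj hvx.symm

lemma csupp_insertMap_of_not_mem_adjComps {C : (G.induce U).ConnectedComponent}
    (hC : C ∉ adjComps G U v) : csupp G (insert v U) (insertMap G v C) = csupp G U C := by
  refine subset_antisymm ?_ (csupp_subset_csupp_insertMap G C)
  intro y hy
  obtain ⟨x, rfl⟩ : ∃ x, (G.induce U).connectedComponentMk x = C := C.exists_rep
  obtain ⟨hyW, hyC⟩ := (mem_csupp G).1 hy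
  have hclosed : ∀ w z : ↥(insert v U), (G.induce (insert v U)).Adj w z →
      w.1 ∈ csupp G U ((G.induce U).connectedComponentMk x) →
      z.1 ∈ csupp G U ((G.induce U).connectedComponentMk x) := by
    rintro w ⟨z, hz⟩ hwz hw
    obtain ⟨hwU, hwC⟩ := (mem_csupp G).1 hw
    have hzv : z ≠ v := by
      rintro rfl
      exact hC ((mem_adjComps G).2 ⟨w, hw, hwz.symm⟩)
    have hzU : z ∈ U := (Set.mem_insert_iff.1 hz).resolve_left hzv
    rw [← hwC]
    exact (mem_csupp G).2 ⟨hzU, ConnectedComponent.connectedComponentMk_eq_of_adj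
      (G := G.induce U) (v := ⟨z, hzU⟩) (w := ⟨w, hwU⟩) hwz.symm⟩
  rw [insertMap_mk] at hyC
  exact mem_of_reachable_of_adj_closed hclosed
    (ConnectedComponent.exact hyC).symm (mem_csupp_mk G x)

lemma insertMap_ne_of_not_mem_adjComps (hvU : v ∉ U) {C : (G.induce U).ConnectedComponent}
    (hC : C ∉ adjComps G U v) :
    insertMap G v C ≠ (G.induce (insert v U)).connectedComponentMk ⟨v, Set.mem_insert v U⟩ := by
  intro h
  have hv := mem_csupp_mk G (U := insert v U) ⟨v, Set.mem_insert v U⟩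
  rw [← h, csupp_insertMap_of_not_mem_adjComps G hC] at hv
  exact hvU (csupp_subset G C hv)

lemma csupp_mk_insert (hvU : v ∉ U) :
    csupp G (insert v U)
        ((G.induce (insert v U)).connectedComponentMk ⟨v, Set.mem_insert v U⟩) =
      insert v (⋃ C ∈ adjComps G U v, csupp G U C) := by
  apply subset_antisymm
  · intro x hx
    rcases eq_or_ne x v with rfl | hxv
    · exact Set.mem_insert x _
    have hxU : x ∈ U := (Set.mem_insert_iff.1 (csupp_subset G _ hx)).resolve_left hxv
    refine Set.mem_insert_of_mem v (Set.mem_biUnion (x := (G.induce U).connectedComponentMk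
      ⟨x, hxU⟩) ?_ (mem_csupp_mk G _))
    by_contra hC
    refine insertMap_ne_of_not_mem_adjComps G hvU hC ?_
    obtain ⟨_, hx⟩ := (mem_csupp G).1 hx
    rw [insertMap_mk, ← hx]
  · rintro x (rfl | hx)
    · exact mem_csupp_mk G _
    obtain ⟨C, hC, hxC⟩ := Set.mem_iUnion₂.1 hx
    rw [← insertMap_eq_of_mem_adjComps G hC]
    exact csupp_subset_csupp_insertMap G C hxC

/-- Passing from `G[U]` to `G[insert v U]` merges `v` with its neighbouring components into one
component and leaves the other components untouched. -/
lemma ncard_setOf_csupp_of_eq_insert {W : Set V} (hvU : v ∉ U) (hW : W = insert v U)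
    (P : Set V → Prop) [DecidablePred P] :
    {D : (G.induce W).ConnectedComponent | P (csupp G W D)}.ncard =
      (if P (insert v (⋃ C ∈ adjComps G U v, csupp G U C)) then 1 else 0) +
        {C | C ∉ adjComps G U v ∧ P (csupp G U C)}.ncard := by
  subst hW
  set D₀ := (G.induce (insert v U)).connectedComponentMk ⟨v, Set.mem_insert v U⟩
  have himage : {D | P (csupp G _ D)} \ {D₀} =
      insertMap G v '' {C | C ∉ adjComps G U v ∧ P (csupp G U C)} := by
    ext D
    constructor
    · rintro ⟨hD, hD₀⟩
      obtain ⟨⟨x, hxW⟩, rfl⟩ := D.exists_rep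
      have hxU : x ∈ U :=
        (Set.mem_insert_iff.1 hxW).resolve_left fun h => by subst h; exact hD₀ rfl
      have hC : (G.induce U).connectedComponentMk ⟨x, hxU⟩ ∉ adjComps G U v := fun hC =>
        hD₀ (insertMap_eq_of_mem_adjComps G hC)
      refine ⟨_, ⟨hC, ?_⟩, rfl⟩
      rwa [← csupp_insertMap_of_not_mem_adjComps G hC]
    · rintro ⟨C, ⟨hC, hP⟩, rfl⟩
      refine ⟨?_, insertMap_ne_of_not_mem_adjComps G hvU hC⟩
      rwa [Set.mem_ofPred_eq, csupp_insertMap_of_not_mem_adjComps G hC]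
  have hinj : Set.InjOn (insertMap G v) {C | C ∉ adjComps G U v ∧ P (csupp G U C)} :=
    fun C hC C' hC' h => csupp_injective G <| by
      rw [← csupp_insertMap_of_not_mem_adjComps G hC.1,
        ← csupp_insertMap_of_not_mem_adjComps G hC'.1, h]
  rw [← hinj.ncard_image, ← himage, ← csupp_mk_insert G hvU]
  split_ifs with hP
  · rw [add_comm, Set.ncard_sdiff_singleton_add_one (s := {D | P (csupp G _ D)}) hP]
  · rw [zero_add, Set.sdiff_singleton_eq_self (s := {D | P (csupp G _ D)}) hP]

lemma degIn_eq_sum_adjComps (U : Set V) (v : V) :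
    degIn G U v = ∑ C ∈ adjComps G U v, degIn G (csupp G U C) v := by
  have : G.neighborSet v ∩ U = G.neighborSet v ∩ ⋃ C ∈ adjComps G U v, csupp G U C := by
    ext x
    simp only [Set.mem_inter_iff, mem_neighborSet, Set.mem_iUnion, exists_prop,
      and_congr_right_iff]
    intro hvx
    refine ⟨fun hx => ⟨_, (mem_adjComps G).2 ⟨x, mem_csupp_mk G ⟨x, hx⟩, hvx⟩,
      mem_csupp_mk G ⟨x, hx⟩⟩, fun ⟨C, _, hxC⟩ => csupp_subset G C hxC⟩
  rw [degIn, this, ← degIn, ← eBetween_singleton_right,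
    eBetween_biUnion_left G (pairwiseDisjoint_csupp G _)]
  simp only [eBetween_singleton_right]

end InsertVertex

lemma compl_union_sdiff_singleton {S T : Set V} {v : V} (hvS : v ∉ S) (hvT : v ∈ T) :
    (S ∪ T \ {v})ᶜ = insert v (S ∪ T)ᶜ := by
  ext x
  rcases eq_or_ne x v with rfl | hxv
  · simp [hvS]
  · simp [hxv]

section Barrier
variable [Finite V] (G : SimpleGraph V) {S T : Set V} {v : V}

lemma degIn_compl_eq (hST : Disjoint S T) (hvT : v ∈ T) :
    degIn G Sᶜ v = degIn G (T \ {v}) v + degIn G (S ∪ T)ᶜ v := by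
  have hS : Sᶜ = insert v (T \ {v} ∪ (S ∪ T)ᶜ) := by
    ext x
    rcases eq_or_ne x v with rfl | hxv
    · simp [Set.disjoint_right.1 hST hvT]
    · have : x ∈ T → x ∉ S := fun h => Set.disjoint_right.1 hST h
      simp only [Set.mem_compl_iff, Set.mem_insert_iff, hxv, Set.mem_union, Set.mem_sdiff,
        Set.mem_singleton_iff]
      tauto
  rw [hS, degIn_insert_self, degIn_union G (Set.disjoint_left.2 fun x (hx : x ∈ T \ {v})
    (hx' : x ∈ (S ∪ T)ᶜ) => hx' (.inr hx.1))]

lemma hNum_sdiff_singleton (hvS : v ∉ S) (hvT : v ∈ T) :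
    hNum G S (T \ {v}) =
      (if Odd (eBetween G (insert v (⋃ C ∈ adjComps G (S ∪ T)ᶜ v, csupp G _ C)) (T \ {v}))
        then 1 else 0) +
        {C | C ∉ adjComps G (S ∪ T)ᶜ v ∧ Odd (eBetween G (csupp G (S ∪ T)ᶜ C) T)}.ncard := by
  have hvU : v ∉ (S ∪ T)ᶜ := fun h => h (.inr hvT)
  rw [hNum, oddComps, ncard_setOf_csupp_of_eq_insert G hvU
    (compl_union_sdiff_singleton hvS hvT) fun A => Odd (eBetween G A (T \ {v}))]
  congr 3
  ext C
  simp only [and_congr_right_iff]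
  intro hC
  have hdeg : degIn G (csupp G _ C) v = 0 :=
    Nat.eq_zero_of_not_pos fun h => hC ((mem_adjComps G).2 ((degIn_pos_iff G _ _).1 h))
  rw [eBetween_eq_eBetween_sdiff_singleton_add G hvT, hdeg, add_zero]

lemma hNum_add_two_le (hST : Disjoint S T) (hvT : v ∈ T)
    (C₀ : (G.induce (S ∪ T)ᶜ).ConnectedComponent) (hC₀ : 2 ≤ degIn G (csupp G _ C₀) v) :
    hNum G S T + 2 ≤ degIn G Sᶜ v + hNum G S (T \ {v}) := by
  have hvS : v ∉ S := Set.disjoint_right.1 hST hvT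
  have hh' := hNum_sdiff_singleton G hvS hvT
  set 𝒜 := adjComps G (S ∪ T)ᶜ v
  set a := (𝒜.filter fun C => Odd (eBetween G (csupp G (S ∪ T)ᶜ C) T)).card
  set t := degIn G (T \ {v}) v
  have hh : hNum G S T = a + _ := ncard_setOf_eq_card_filter_add 𝒜 _
  have hdeg : degIn G Sᶜ v = t + ∑ C ∈ 𝒜, degIn G (csupp G (S ∪ T)ᶜ C) v := by
    rw [degIn_compl_eq G hST hvT, degIn_eq_sum_adjComps G (S ∪ T)ᶜ v]
  have hmerged : eBetween G (insert v (⋃ C ∈ 𝒜, csupp G (S ∪ T)ᶜ C)) (T \ {v}) =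
      t + ∑ C ∈ 𝒜, eBetween G (csupp G (S ∪ T)ᶜ C) (T \ {v}) := by
    have hvA : v ∉ ⋃ C ∈ 𝒜, csupp G (S ∪ T)ᶜ C := by
      simpa using fun C _ h => (csupp_subset G C h : v ∈ (S ∪ T)ᶜ) (.inr hvT)
    rw [Set.insert_eq, eBetween_union_left G (Set.disjoint_singleton_left.2 hvA),
      eBetween_singleton_left, eBetween_biUnion_left G (pairwiseDisjoint_csupp G _)]
  have hsplit : ∑ C ∈ 𝒜, eBetween G (csupp G (S ∪ T)ᶜ C) T =
      ∑ C ∈ 𝒜, eBetween G (csupp G (S ∪ T)ᶜ C) (T \ {v}) +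
        ∑ C ∈ 𝒜, degIn G (csupp G (S ∪ T)ᶜ C) v := by
    rw [← Finset.sum_add_distrib]
    exact Finset.sum_congr rfl fun C _ => eBetween_eq_eBetween_sdiff_singleton_add G hvT _
  have hparity : Odd (∑ C ∈ 𝒜, eBetween G (csupp G (S ∪ T)ᶜ C) T) ↔ Odd a :=
    Finset.odd_sum_iff_odd_card_odd _
  have hC₀𝒜 : C₀ ∈ 𝒜 := (mem_adjComps G).2 ((degIn_pos_iff G _ _).1 (by omega))
  have hsum : 𝒜.card + 1 ≤ ∑ C ∈ 𝒜, degIn G (csupp G (S ∪ T)ᶜ C) v :=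
    card_add_one_le_sum (fun C hC => (degIn_pos_iff G _ _).2 ((mem_adjComps G).1 hC)) hC₀𝒜 hC₀
  have ha : a ≤ 𝒜.card := Finset.card_filter_le _ _
  rw [hh, hh', hdeg, hmerged]
  split_ifs with hodd <;> simp only [Nat.odd_iff] at hparity hodd <;> omega

lemma deltaST_sdiff_singleton (hvT : v ∈ T) :
    deltaST G S (T \ {v}) =
      deltaST G S T + 2 - degIn G Sᶜ v + hNum G S T - hNum G S (T \ {v}) := by
  have hsum : ∑ᶠ x ∈ T, (degIn G Sᶜ x : ℤ) =
      degIn G Sᶜ v + ∑ᶠ x ∈ T \ {v}, (degIn G Sᶜ x : ℤ) := by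
    rw [← finsum_mem_insert (fun x => (degIn G Sᶜ x : ℤ)) (fun h : v ∈ T \ {v} => h.2 rfl)
      (Set.toFinite _), Set.insert_sdiff_singleton, Set.insert_eq_of_mem hvT]
  have hcard := Set.ncard_sdiff_singleton_add_one hvT
  simp only [deltaST, hsum, ← hcard]
  push_cast
  ring

lemma isBarrier_sdiff_singleton (h : IsBarrier G S T) (hvT : v ∈ T)
    (C₀ : (G.induce (S ∪ T)ᶜ).ConnectedComponent) (hC₀ : 2 ≤ degIn G (csupp G _ C₀) v) :
    IsBarrier G S (T \ {v}) := by
  refine ⟨h.1.mono_right Set.sdiff_subset, ?_⟩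
  have hle : (hNum G S T : ℤ) + 2 ≤ degIn G Sᶜ v + hNum G S (T \ {v}) := by
    exact_mod_cast hNum_add_two_le G h.1 hvT C₀ hC₀
  rw [deltaST_sdiff_singleton G hvT]
  linarith [h.2]

end Barrier

theorem vizing_stmt_9_general [Fintype V] (G : SimpleGraph V) (S T : Set V)
    (hmin : IsMinBarrier G S T) :
    ∀ C : (G.induce (S ∪ T)ᶜ).ConnectedComponent,
      Odd (eBetween G (csupp G (S ∪ T)ᶜ C) T) →
      ∀ v ∈ T, degIn G (csupp G (S ∪ T)ᶜ C) v ≤ 1 := by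
  intro C _ v hvT
  by_contra! hC
  have hvS : v ∉ S := Set.disjoint_right.1 hmin.1.1 hvT
  have hsmaller : (S ∪ T \ {v}).ncard < (S ∪ T).ncard := by
    refine Set.ncard_lt_ncard ((Set.ssubset_iff_of_subset
      (Set.union_subset_union_right S Set.sdiff_subset)).2 ⟨v, .inr hvT, ?_⟩)
    simp [hvS]
  exact hsmaller.not_ge (hmin.2 _ _ (isBarrier_sdiff_singleton G hmin.1 hvT C hC))

theorem vizing_stmt_9 [Fintype V] (G : SimpleGraph V) (S T : Set V)
    (hG : ¬ HasTwoFactor G) (hmin : IsMinBarrier G S T) :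
    ∀ C : (G.induce (S ∪ T)ᶜ).ConnectedComponent,
      Odd (eBetween G (csupp G (S ∪ T)ᶜ C) T) →
      ∀ v ∈ T, degIn G (csupp G (S ∪ T)ᶜ C) v ≤ 1 :=
  vizing_stmt_9_general G S T hmin

end VizingTwoFactor
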